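/- arXiv:1402.4697 — 2 statements merged into one kernel-verified Lean document; each statement's English description precedes it below -/
import Mathlib

section
/- Let ω be an arbitrary modulus of continuity, E ⊆ 𝕋 closed, and g ∈ I_ω(E). Let (Δ_n) be a sequence in Ω_E with Δ_n ⊆ Δ_{n+1} for all n and ∪_n Δ_n = 𝕋\E, and let (h_n) ⊂ H^∞ satisfy: (i) sup_n ‖h_n‖_∞ < ∞; (ii) each h_n extends both to a continuous function on the closed disk minus E and to an analytic function across Δ_n; (iii) for each p, the sequences (h_n)_{n≥p} and (h_n')_{n≥p} converge uniformly to 0 on every compact subset of Δ_p. Then, for each n, g·h_n ∈ I_ω(E) if and only if sup_{ξ≠ζ∈𝕋\E} |g(ξ)|·|h_n(ξ)−h_n(ζ)|/ω(|ξ−ζ|) < ∞. -/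
open Complex Metric Set MeasureTheory Filter

noncomputable section

/-- A modulus of continuity: nonnegative, nondecreasing, continuous on `[0,2]`,
vanishing at `0`, not identically zero, with `t ↦ ω t / t` nonincreasing. -/
structure ModulusOfContinuity where
  toFun : ℝ → ℝ
  nonneg : ∀ t ∈ Set.Icc (0:ℝ) 2, 0 ≤ toFun t
  mono : MonotoneOn toFun (Set.Icc (0:ℝ) 2)
  cont : ContinuousOn toFun (Set.Icc (0:ℝ) 2)
  zero : toFun 0 = 0
  nontrivial : ∃ t ∈ Set.Icc (0:ℝ) 2, toFun t ≠ 0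
  quot_anti : AntitoneOn (fun t => toFun t / t) (Set.Ioc (0:ℝ) 2)

instance : CoeFun ModulusOfContinuity (fun _ => ℝ → ℝ) := ⟨ModulusOfContinuity.toFun⟩

/-- The condition `inf_{0<t≤1} ω(t²)/ω(t) > 0`. -/
def EtaPos (ω : ModulusOfContinuity) : Prop :=
  ∃ η > (0:ℝ), ∀ t ∈ Set.Ioc (0:ℝ) 1, η * ω t ≤ ω (t ^ 2)

/-- Membership in `H^∞`: bounded analytic on the open unit disk. -/
def MemHinf (f : ℂ → ℂ) : Prop :=
  DifferentiableOn ℂ f (ball (0:ℂ) 1) ∧ ∃ M : ℝ, ∀ z ∈ ball (0:ℂ) 1, ‖f z‖ ≤ M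

/-- Membership in the big Lipschitz algebra `Lip_ω` (boundary form, by Tamrazov's theorem):
continuous on the closed disk, analytic in the open disk, and `ω`-Lipschitz on the circle. -/
def MemLip (ω : ModulusOfContinuity) (f : ℂ → ℂ) : Prop :=
  ContinuousOn f (closedBall (0:ℂ) 1) ∧ DifferentiableOn ℂ f (ball (0:ℂ) 1) ∧
    ∃ C : ℝ, ∀ ξ ∈ sphere (0:ℂ) 1, ∀ ζ ∈ sphere (0:ℂ) 1, ξ ≠ ζ →
      ‖f ξ - f ζ‖ ≤ C * ω (‖ξ - ζ‖)

/-- Supremum norm over the closed unit disk. -/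
def supNorm (f : ℂ → ℂ) : ℝ :=
  sSup ((fun z => ‖f z‖) '' closedBall (0:ℂ) 1)

/-- The `ω`-Lipschitz seminorm on the unit circle. -/
def lipSemi (ω : ModulusOfContinuity) (f : ℂ → ℂ) : ℝ :=
  sSup ((fun p : ℂ × ℂ => ‖f p.1 - f p.2‖ / ω (‖p.1 - p.2‖)) ''
    {p : ℂ × ℂ | p.1 ∈ sphere (0:ℂ) 1 ∧ p.2 ∈ sphere (0:ℂ) 1 ∧ p.1 ≠ p.2})

/-- The norm `‖f‖_ω = ‖f‖_∞ + sup_{ξ≠ζ∈𝕋} |f ξ - f ζ|/ω(|ξ-ζ|)`. -/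
def lipNorm (ω : ModulusOfContinuity) (f : ℂ → ℂ) : ℝ := supNorm f + lipSemi ω f

/-- A closed ideal of the Banach algebra `Lip_ω`. -/
structure ClosedIdealLip (ω : ModulusOfContinuity) where
  carrier : Set (ℂ → ℂ)
  mem_lip : ∀ f ∈ carrier, MemLip ω f
  add_mem : ∀ f ∈ carrier, ∀ g ∈ carrier, (fun z => f z + g z) ∈ carrier
  smul_mem : ∀ (c : ℂ), ∀ f ∈ carrier, (fun z => c * f z) ∈ carrier
  mul_mem : ∀ f ∈ carrier, ∀ g, MemLip ω g → (fun z => f z * g z) ∈ carrier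
  closed_mem : ∀ f, MemLip ω f →
    (∀ ε > (0:ℝ), ∃ g ∈ carrier, lipNorm ω (fun z => f z - g z) ≤ ε) → f ∈ carrier

/-- The hull `E_I = {ξ ∈ 𝕋 : f ξ = 0 for all f ∈ I}`. -/
def hullSet (I : Set (ℂ → ℂ)) : Set ℂ :=
  {ξ | ξ ∈ sphere (0:ℂ) 1 ∧ ∀ f ∈ I, f ξ = 0}

/-- `E(δ) = {ξ ∈ 𝕋 : d(ξ,E) ≤ δ}`. -/
def ENbhd (E : Set ℂ) (δ : ℝ) : Set ℂ :=
  {ξ | ξ ∈ sphere (0:ℂ) 1 ∧ Metric.infDist ξ E ≤ δ}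

/-- The condition `lim_{δ→0} sup_{ξ≠ζ∈E(δ)} |f ξ - f ζ|/ω(|ξ-ζ|) = 0`. -/
def JCond (ω : ModulusOfContinuity) (E : Set ℂ) (f : ℂ → ℂ) : Prop :=
  ∀ ε > (0:ℝ), ∃ δ > (0:ℝ), ∀ ξ ∈ ENbhd E δ, ∀ ζ ∈ ENbhd E δ, ξ ≠ ζ →
    ‖f ξ - f ζ‖ ≤ ε * ω (‖ξ - ζ‖)

/-- `I_ω(E)`. -/
def MemI (ω : ModulusOfContinuity) (E : Set ℂ) (f : ℂ → ℂ) : Prop :=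
  MemLip ω f ∧ ∀ ξ ∈ E, f ξ = 0

/-- `J_ω(E)`. -/
def MemJ (ω : ModulusOfContinuity) (E : Set ℂ) (f : ℂ → ℂ) : Prop :=
  MemI ω E f ∧ JCond ω E f

/-- `u` divides `f` in `H^∞`: `f / u ∈ H^∞`. -/
def DividesIn (u f : ℂ → ℂ) : Prop :=
  ∃ h : ℂ → ℂ, MemHinf h ∧ ∀ z ∈ ball (0:ℂ) 1, f z = u z * h z

/-- An inner function: bounded by 1, analytic on the disk, with radial limits of
modulus 1 at almost every boundary point. -/
def IsInner (u : ℂ → ℂ) : Prop :=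
  DifferentiableOn ℂ u (ball (0:ℂ) 1) ∧ (∀ z ∈ ball (0:ℂ) 1, ‖u z‖ ≤ 1) ∧
  ∀ᵐ (θ : ℝ) ∂(volume : Measure ℝ),
    Tendsto (fun r : ℝ => ‖u ((r : ℂ) * Complex.exp ((θ : ℂ) * Complex.I))‖)
      (nhdsWithin 1 (Set.Iio 1)) (nhds 1)

/-- `U` is the greatest common inner divisor of the inner parts of the nonzero members of `I`. -/
def IsGcdInner (I : Set (ℂ → ℂ)) (U : ℂ → ℂ) : Prop :=
  IsInner U ∧ (∀ f ∈ I, f ≠ 0 → DividesIn U f) ∧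
  ∀ W : ℂ → ℂ, IsInner W → (∀ f ∈ I, f ≠ 0 → DividesIn W f) → DividesIn W U

/-- `J_ω(E, U)`. -/
def MemJU (ω : ModulusOfContinuity) (E : Set ℂ) (U : ℂ → ℂ) (f : ℂ → ℂ) : Prop :=
  MemLip ω f ∧ (∀ ξ ∈ E, f ξ = 0) ∧ DividesIn U f ∧ JCond ω E f

/-- `E ⊆ 𝕋` has zero Lebesgue (arclength) measure. -/
def CircNull (E : Set ℂ) : Prop :=
  volume {θ : ℝ | θ ∈ Set.Ico (0:ℝ) (2 * Real.pi) ∧ Complex.exp ((θ : ℂ) * Complex.I) ∈ E} = 0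

/-- The spectrum `σ(U) = {λ ∈ 𝔻̄ : liminf_{z→λ, z∈𝔻} |U z| = 0}`. -/
def innerSpec (U : ℂ → ℂ) : Set ℂ :=
  {l | l ∈ closedBall (0:ℂ) 1 ∧
    Filter.liminf (fun z => ‖U z‖) (nhdsWithin l (ball (0:ℂ) 1)) = 0}

/-- An outer function: `F z = c · exp((1/2π) ∫ (e^{iθ}+z)/(e^{iθ}-z) w(θ) dθ)`
with `|c| = 1` and `w` integrable. -/
def IsOuter (F : ℂ → ℂ) : Prop :=
  ∃ c : ℂ, ‖c‖ = 1 ∧ ∃ w : ℝ → ℝ,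
    IntervalIntegrable w volume 0 (2 * Real.pi) ∧
    ∀ z ∈ ball (0:ℂ) 1, F z = c * Complex.exp ((1 / (2 * Real.pi) : ℂ) *
      ∫ θ in (0:ℝ)..(2 * Real.pi),
        ((Complex.exp ((θ : ℂ) * Complex.I) + z) / (Complex.exp ((θ : ℂ) * Complex.I) - z)) *
          (w θ : ℂ))

/-- Boundary zero set `E_f = {ξ ∈ 𝕋 : f ξ = 0}`. -/
def bdryZeroSet (f : ℂ → ℂ) : Set ℂ := {ξ | ξ ∈ sphere (0:ℂ) 1 ∧ f ξ = 0}

/-- `Δ ∈ Ω_E`: `Δ` is a union of connected components (complementary arcs) of `𝕋 \ E`. -/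
def MemOmega (E : Set ℂ) (Δ : Set ℂ) : Prop :=
  Δ ⊆ sphere (0:ℂ) 1 \ E ∧
  ∀ z ∈ Δ, connectedComponentIn (sphere (0:ℂ) 1 \ E) z ⊆ Δ

/-- The Korenblum outer function
`f_Γ z = exp((1/2π) ∫_Γ (ξ+z)/(ξ-z) log|f ξ| |dξ|)`. -/
def korenblum (f : ℂ → ℂ) (Γ : Set ℂ) (z : ℂ) : ℂ :=
  Complex.exp ((1 / (2 * Real.pi) : ℂ) *
    ∫ θ in (0:ℝ)..(2 * Real.pi),
      Set.indicator Γ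
        (fun ξ => ((ξ + z) / (ξ - z)) * (Real.log (‖f ξ‖) : ℂ))
        (Complex.exp ((θ : ℂ) * Complex.I)))

/-- A singular inner function with associated positive singular measure `μ`
(carried by `[0,2π)` via `θ ↦ e^{iθ}`). -/
def IsSingularInnerWith (S : ℂ → ℂ) (μ : Measure ℝ) : Prop :=
  μ Set.univ < ⊤ ∧ μ (Set.Ico (0:ℝ) (2 * Real.pi))ᶜ = 0 ∧
  μ.MutuallySingular volume ∧
  ∀ z ∈ ball (0:ℂ) 1, S z = Complex.exp (-(1 / (2 * Real.pi) : ℂ) *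
    ∫ θ, ((Complex.exp ((θ : ℂ) * Complex.I) + z) /
      (Complex.exp ((θ : ℂ) * Complex.I) - z)) ∂μ)

/-- Single Blaschke factor with zero `w` (with the conventions that `w = 0` gives the factor
`z`, and `|w| = 1` gives the constant factor `1`, used for padding). -/
def blaschkeFactor (w z : ℂ) : ℂ :=
  if w = 0 then z
  else ((‖w‖ : ℂ) / w) * (w - z) / (1 - (starRingEnd ℂ) w * z)

/-- `B` is the Blaschke product with zero sequence `a` (boundary points of the sequence
serve as padding, contributing factors `1`). -/
def IsBlaschkeOf (B : ℂ → ℂ) (a : ℕ → ℂ) : Prop :=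
  (∀ n, ‖a n‖ ≤ 1) ∧ Summable (fun n => 1 - ‖a n‖) ∧
  ∀ z ∈ ball (0:ℂ) 1, HasProd (fun n => blaschkeFactor (a n) z) (B z)

/-- Total-variation distance between two (finite) measures. -/
def tvDist (μ ν : Measure ℝ) : ℝ :=
  sSup {r : ℝ | ∃ s : Set ℝ, MeasurableSet s ∧ r = |(μ s).toReal - (ν s).toReal|}

/-- The function `z ↦ exp(-(1/2π) ∫ (e^{iθ}+z)/(e^{iθ}-z) dμ(θ))`, defining a singular
inner function on the disk together with its analytic extension off the support of `μ`. -/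
def singExp (μ : Measure ℝ) (z : ℂ) : ℂ :=
  Complex.exp (-(1 / (2 * Real.pi) : ℂ) *
    ∫ θ, ((Complex.exp ((θ : ℂ) * Complex.I) + z) /
      (Complex.exp ((θ : ℂ) * Complex.I) - z)) ∂μ)

/-- `a_U(ζ) = Σ_n (1-|z_n|²)/|ζ-z_n|² + (1/π) ∫ |e^{iθ}-ζ|⁻² dμ(θ)` for an inner function
with zeros `a` and singular measure `μ`. -/
def aFun (a : ℕ → ℂ) (μ : Measure ℝ) (ζ : ℂ) : ℝ :=
  (∑' n, (1 - ‖a n‖ ^ 2) / ‖ζ - a n‖ ^ 2) +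
  (1 / Real.pi) * ∫ θ, (1 / ‖Complex.exp ((θ : ℂ) * Complex.I) - ζ‖ ^ 2) ∂μ

/-!
On the circle, `g ξ h ξ - g ζ h ζ = (g ξ - g ζ) h ξ + g ζ (h ξ - h ζ)`, and `g = 0` on `E`.
Since `h_n` is bounded on the closed disk minus `E` (by continuity from its bound `M` in the
disk), the `ω`-Lipschitz constant of `g h_n` and the weighted constant
`sup |g ξ| |h_n ξ - h_n ζ| / ω(|ξ - ζ|)` differ by at most `M` times the `ω`-Lipschitz constant
of `g`. Continuity of `g h_n` on the closed disk also rests on the bound: at a zero of `g` the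
product tends to `0`, and where `g ≠ 0` we are locally off `E`, where `h_n` is continuous.
-/

open Topology

def LipBoundOn (ω : ModulusOfContinuity) (C : ℝ) (S : Set ℂ) (f : ℂ → ℂ) : Prop :=
  ∀ ξ ∈ S, ∀ ζ ∈ S, ξ ≠ ζ → ‖f ξ - f ζ‖ ≤ C * ω ‖ξ - ζ‖

lemma ModulusOfContinuity.nonneg_of_mem_sphere (ω : ModulusOfContinuity) {ξ ζ : ℂ}
    (hξ : ξ ∈ sphere (0:ℂ) 1) (hζ : ζ ∈ sphere (0:ℂ) 1) : 0 ≤ ω ‖ξ - ζ‖ := by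
  refine ω.nonneg _ ⟨norm_nonneg _, ?_⟩
  rw [mem_sphere_zero_iff_norm] at hξ hζ
  linarith [norm_sub_le ξ ζ]

lemma ModulusOfContinuity.mul_le_max_zero_mul (ω : ModulusOfContinuity) {ξ ζ : ℂ}
    (hξ : ξ ∈ sphere (0:ℂ) 1) (hζ : ζ ∈ sphere (0:ℂ) 1) (C : ℝ) :
    C * ω ‖ξ - ζ‖ ≤ max C 0 * ω ‖ξ - ζ‖ :=
  mul_le_mul_of_nonneg_right (le_max_left _ _) (ω.nonneg_of_mem_sphere hξ hζ)

lemma LipBoundOn.max_zero {ω : ModulusOfContinuity} {C : ℝ} {S : Set ℂ} {f : ℂ → ℂ}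
    (hS : S ⊆ sphere (0:ℂ) 1) (hf : LipBoundOn ω C S f) : LipBoundOn ω (max C 0) S f :=
  fun ξ hξ ζ hζ hne => (hf ξ hξ ζ hζ hne).trans (ω.mul_le_max_zero_mul (hS hξ) (hS hζ) C)

lemma norm_mul_sub_mul_le {R : Type*} [SeminormedRing R] (a b c d : R) :
    ‖a * b - c * d‖ ≤ ‖a - c‖ * ‖b‖ + ‖c‖ * ‖b - d‖ := by
  calc ‖a * b - c * d‖ = ‖(a - c) * b + c * (b - d)‖ := by noncomm_ring
    _ ≤ ‖a - c‖ * ‖b‖ + ‖c‖ * ‖b - d‖ :=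
      (norm_add_le _ _).trans (add_le_add (norm_mul_le _ _) (norm_mul_le _ _))

lemma norm_mul_norm_sub_le {R : Type*} [NormedDivisionRing R] (a b c d : R) :
    ‖a‖ * ‖b - d‖ ≤ ‖a * b - c * d‖ + ‖a - c‖ * ‖d‖ := by
  calc ‖a‖ * ‖b - d‖ = ‖(a * b - c * d) - (a - c) * d‖ := by rw [← norm_mul]; noncomm_ring
    _ ≤ ‖a * b - c * d‖ + ‖a - c‖ * ‖d‖ := by
      rw [← norm_mul (a - c)]; exact norm_sub_le _ _

lemma norm_le_of_continuousOn_closedBall_diff {V F : Type*} [NormedAddCommGroup V]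
    [NormedSpace ℝ V] [SeminormedAddCommGroup F] {f : V → F} {x : V} {r M : ℝ} {E : Set V}
    (hr : r ≠ 0) (hE : E ⊆ sphere x r) (hf : ContinuousOn f (closedBall x r \ E))
    (hM : ∀ z ∈ ball x r, ‖f z‖ ≤ M) {z : V} (hz : z ∈ closedBall x r \ E) : ‖f z‖ ≤ M := by
  have hball : ball x r ⊆ closedBall x r \ E := fun w hw =>
    ⟨ball_subset_closedBall hw, fun hwE => (mem_ball.1 hw).ne (mem_sphere.1 (hE hwE))⟩
  have hfz : f z ∈ closure (closedBall 0 M) :=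
    ((hf z hz).mono hball).mem_closure (by rw [closure_ball x hr]; exact hz.1)
      (fun w hw => mem_closedBall_zero_iff.2 (hM w hw))
  simpa [closure_closedBall] using hfz

lemma continuousOn_mul_of_isBounded_off_zeros {X R : Type*} [TopologicalSpace X]
    [NormedRing R] {s E : Set X} {g h : X → R} {M : ℝ}
    (hg : ContinuousOn g s) (hgE : ∀ x ∈ E, g x = 0) (hh : ContinuousOn h (s \ E))
    (hM : ∀ x ∈ s \ E, ‖h x‖ ≤ M) : ContinuousOn (fun x => g x * h x) s := by
  intro x hx
  by_cases hgx : g x = 0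
  · have hbound : ∀ w ∈ s, ‖g w * h w‖ ≤ ‖g w‖ * M := fun w hw => by
      by_cases hwE : w ∈ E
      · simp [hgE w hwE]
      · exact (norm_mul_le _ _).trans
          (mul_le_mul_of_nonneg_left (hM w ⟨hw, hwE⟩) (norm_nonneg _))
    have hlim : Tendsto (fun w => ‖g w‖ * M) (𝓝[s] x) (𝓝 0) := by
      simpa [hgx] using (hg x hx).tendsto.norm.mul_const M
    show Tendsto _ _ (𝓝 (g x * h x))
    rw [hgx, zero_mul]
    exact squeeze_zero_norm' (eventually_nhdsWithin_of_forall hbound) hlim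
  · have hoff : s \ E ∈ 𝓝[s] x := by
      filter_upwards [self_mem_nhdsWithin, (hg x hx).eventually_ne hgx] with w hws hgw
      exact ⟨hws, fun hwE => hgw (hgE w hwE)⟩
    exact (((hg.mono sdiff_subset).mul hh) x ⟨hx, fun hxE => hgx (hgE x hxE)⟩).mono_of_mem_nhdsWithin
      hoff

lemma weighted_bound_of_lipBoundOn_mul {ω : ModulusOfContinuity} {S E : Set ℂ} {g f : ℂ → ℂ}
    {C Cg M : ℝ} (hgf : LipBoundOn ω C S (fun z => g z * f z)) (hg : LipBoundOn ω Cg S g)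
    (hf : ∀ z ∈ S \ E, ‖f z‖ ≤ M) :
    ∀ ξ ∈ S \ E, ∀ ζ ∈ S \ E, ξ ≠ ζ → ‖g ξ‖ * ‖f ξ - f ζ‖ ≤ (C + M * Cg) * ω ‖ξ - ζ‖ := by
  intro ξ hξ ζ hζ hne
  have hgξζ := hg ξ hξ.1 ζ hζ.1 hne
  calc ‖g ξ‖ * ‖f ξ - f ζ‖ ≤ ‖g ξ * f ξ - g ζ * f ζ‖ + ‖g ξ - g ζ‖ * ‖f ζ‖ :=
        norm_mul_norm_sub_le _ _ _ _
    _ ≤ C * ω ‖ξ - ζ‖ + Cg * ω ‖ξ - ζ‖ * M :=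
        add_le_add (hgf ξ hξ.1 ζ hζ.1 hne)
          (mul_le_mul hgξζ (hf ζ hζ) (norm_nonneg _) ((norm_nonneg _).trans hgξζ))
    _ = (C + M * Cg) * ω ‖ξ - ζ‖ := by ring

lemma lipBoundOn_mul_of_weighted_bound {ω : ModulusOfContinuity} {E : Set ℂ} {g f : ℂ → ℂ}
    {C Cg M : ℝ} (hgE : ∀ z ∈ E, g z = 0) (hg : LipBoundOn ω Cg (sphere (0:ℂ) 1) g)
    (hf : ∀ z ∈ sphere (0:ℂ) 1 \ E, ‖f z‖ ≤ M)
    (hC : ∀ ξ ∈ sphere (0:ℂ) 1 \ E, ∀ ζ ∈ sphere (0:ℂ) 1 \ E, ξ ≠ ζ →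
      ‖g ξ‖ * ‖f ξ - f ζ‖ ≤ C * ω ‖ξ - ζ‖) :
    LipBoundOn ω (max C 0 + max M 0 * max Cg 0) (sphere (0:ℂ) 1) (fun z => g z * f z) := by
  have hg' := hg.max_zero subset_rfl
  have off_E : ∀ ξ ∈ sphere (0:ℂ) 1 \ E, ∀ ζ ∈ sphere (0:ℂ) 1, ξ ≠ ζ →
      ‖g ξ * f ξ - g ζ * f ζ‖ ≤ (max C 0 + max M 0 * max Cg 0) * ω ‖ξ - ζ‖ := by
    intro ξ hξ ζ hζ hne
    have hgξζ := hg' ξ hξ.1 ζ hζ hne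
    have hweighted : ‖g ζ‖ * ‖f ξ - f ζ‖ ≤ max C 0 * ω ‖ξ - ζ‖ := by
      by_cases hζE : ζ ∈ E
      · rw [hgE ζ hζE, norm_zero, zero_mul]
        exact mul_nonneg (le_max_right _ _) (ω.nonneg_of_mem_sphere hξ.1 hζ)
      · rw [norm_sub_rev (f ξ), norm_sub_rev ξ]
        exact (hC ζ ⟨hζ, hζE⟩ ξ hξ hne.symm).trans (ω.mul_le_max_zero_mul hζ hξ.1 C)
    calc ‖g ξ * f ξ - g ζ * f ζ‖ ≤ ‖g ξ - g ζ‖ * ‖f ξ‖ + ‖g ζ‖ * ‖f ξ - f ζ‖ :=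
          norm_mul_sub_mul_le _ _ _ _
      _ ≤ max Cg 0 * ω ‖ξ - ζ‖ * max M 0 + max C 0 * ω ‖ξ - ζ‖ :=
          add_le_add (mul_le_mul hgξζ ((hf ξ hξ).trans (le_max_left _ _)) (norm_nonneg _)
            ((norm_nonneg _).trans hgξζ)) hweighted
      _ = (max C 0 + max M 0 * max Cg 0) * ω ‖ξ - ζ‖ := by ring
  intro ξ hξ ζ hζ hne
  by_cases hξE : ξ ∈ E
  · by_cases hζE : ζ ∈ E
    · simp only [hgE ξ hξE, hgE ζ hζE, zero_mul, sub_zero, norm_zero]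
      exact mul_nonneg (by positivity) (ω.nonneg_of_mem_sphere hξ hζ)
    · rw [norm_sub_rev, norm_sub_rev ξ]
      exact off_E ζ ⟨hζ, hζE⟩ ξ hξ hne.symm
  · exact off_E ξ ⟨hξ, hξE⟩ ζ hζ hne

theorem hilbert_lemma_Ipart_general
    (ω : ModulusOfContinuity)
    (E : Set ℂ) (hEsub : E ⊆ sphere (0:ℂ) 1)
    (g : ℂ → ℂ) (hg : MemI ω E g)
    (Δ : ℕ → Set ℂ)
    (h : ℕ → ℂ → ℂ)
    (hbdd : ∃ M : ℝ, ∀ n, ∀ z ∈ ball (0:ℂ) 1, ‖h n z‖ ≤ M)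
    (hcont : ∀ n, ContinuousOn (h n) (closedBall (0:ℂ) 1 \ E))
    (hanal : ∀ n, ∃ O : Set ℂ, IsOpen O ∧ ball (0:ℂ) 1 ∪ Δ n ⊆ O ∧
      DifferentiableOn ℂ (h n) O) :
    ∀ n, MemI ω E (fun z => g z * h n z) ↔
      ∃ C : ℝ, ∀ ξ ∈ sphere (0:ℂ) 1 \ E, ∀ ζ ∈ sphere (0:ℂ) 1 \ E, ξ ≠ ζ →
        ‖g ξ‖ * ‖h n ξ - h n ζ‖ ≤ C * ω (‖ξ - ζ‖) := by
  intro n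
  obtain ⟨M, hM⟩ := hbdd
  have hhM : ∀ z ∈ closedBall (0:ℂ) 1 \ E, ‖h n z‖ ≤ M := fun z hz =>
    norm_le_of_continuousOn_closedBall_diff one_ne_zero hEsub (hcont n) (hM n) hz
  have hhM_sphere : ∀ z ∈ sphere (0:ℂ) 1 \ E, ‖h n z‖ ≤ M := fun z hz =>
    hhM z (sdiff_subset_sdiff_left sphere_subset_closedBall hz)
  obtain ⟨⟨hgcont, hgdiff, Cg, hCg⟩, hgE⟩ := hg
  constructor
  · rintro ⟨⟨-, -, C, hC⟩, -⟩
    exact ⟨C + M * Cg, weighted_bound_of_lipBoundOn_mul hC hCg hhM_sphere⟩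
  · rintro ⟨C, hC⟩
    obtain ⟨O, -, hO, hdiff⟩ := hanal n
    exact ⟨⟨continuousOn_mul_of_isBounded_off_zeros hgcont hgE (hcont n) hhM,
      hgdiff.mul (hdiff.mono (subset_union_left.trans hO)),
      _, lipBoundOn_mul_of_weighted_bound hgE hCg hhM_sphere hC⟩,
      fun z hz => by simp [hgE z hz]⟩

/-- **Lemma (hilbert), first part.** Under the stated hypotheses on `(Δ_n)` and `(h_n)`,
`g·h_n ∈ I_ω(E)` if and only if the weighted difference quotients of `h_n` against `g`
are bounded on `𝕋 \ E`. -/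
theorem hilbert_lemma_Ipart
    (ω : ModulusOfContinuity)
    (E : Set ℂ) (hEsub : E ⊆ sphere (0:ℂ) 1) (hEclosed : IsClosed E)
    (g : ℂ → ℂ) (hg : MemI ω E g)
    (Δ : ℕ → Set ℂ) (hΔ : ∀ n, MemOmega E (Δ n))
    (hΔmono : ∀ n, Δ n ⊆ Δ (n + 1))
    (hΔunion : (⋃ n, Δ n) = sphere (0:ℂ) 1 \ E)
    (h : ℕ → ℂ → ℂ)
    (hbdd : ∃ M : ℝ, ∀ n, ∀ z ∈ ball (0:ℂ) 1, ‖h n z‖ ≤ M)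
    (hcont : ∀ n, ContinuousOn (h n) (closedBall (0:ℂ) 1 \ E))
    (hanal : ∀ n, ∃ O : Set ℂ, IsOpen O ∧ ball (0:ℂ) 1 ∪ Δ n ⊆ O ∧
      DifferentiableOn ℂ (h n) O)
    (hconv : ∀ p : ℕ, ∀ K ⊆ Δ p, IsCompact K →
      TendstoUniformlyOn (fun n => h n) 0 atTop K ∧
      TendstoUniformlyOn (fun n => deriv (h n)) 0 atTop K) :
    ∀ n, MemI ω E (fun z => g z * h n z) ↔
      ∃ C : ℝ, ∀ ξ ∈ sphere (0:ℂ) 1 \ E, ∀ ζ ∈ sphere (0:ℂ) 1 \ E, ξ ≠ ζ →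
        ‖g ξ‖ * ‖h n ξ - h n ζ‖ ≤ C * ω (‖ξ - ζ‖) :=
  hilbert_lemma_Ipart_general ω E hEsub g hg Δ h hbdd hcont hanal
end
end

section
/- Let ω be an arbitrary modulus of continuity, E ⊆ 𝕋 closed, and g ∈ J_ω(E). Let A = {a_0,…,a_K} be a finite sequence of points of E (not necessarily distinct) and for 0 < ρ ≤ 1 set φ_{ρ,K}(z) = ∏_{k=0}^{K} (z·conj(a_k) − 1)/(z·conj(a_k) − 1 − ρ). Then lim_{ρ→0⁺} ‖φ_{ρ,K}·g − g‖_ω = 0. -/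
/-! Each factor `φ_a(z) = (z ā - 1)/(z ā - 1 - ρ)` is harmless on the closed disk because
`Re (z ā - 1) ≤ 0` there: `|φ_a| ≤ 1`, `|φ_a(z) - 1| ≤ ρ / max(ρ, |z - a|)` and
`|φ_a(ξ) - φ_a(ζ)| ≤ ρ |ξ - ζ| / (max(ρ, |ξ - a|) max(ρ, |ζ - a|))`. Since `g` vanishes at the
`a_k`, `|g(z)| ≤ C ω(|z - a_k|)`, and `ρ ω(r) / max(ρ, r) ≤ ω(√ρ)` bounds `(φ - 1) g` by
`O(ω(√ρ))` on `𝕋`, hence on the disk by the maximum principle.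

For the seminorm write
`(φ - 1) g (ξ) - (φ - 1) g (ζ) = (φ(ξ) - 1)(g(ξ) - g(ζ)) + (φ(ξ) - φ(ζ)) g(ζ)`.
If `ξ, ζ ∈ E(δ)`, the `J_ω(E)` condition makes `g` `ε`-flat there, and
`ω(s) ρ d / (max(ρ, r) max(ρ, s)) ≤ 2 ω(d)` whenever `d ≤ r + s`, uniformly in `ρ`.
If `ξ ∉ E(δ)`, all `|ξ - a_k| ≥ δ` and the same terms are `O((ρ + ω(√ρ)) / δ) ω(d)`, using
`ω(2) d ≤ 2 ω(d)`. So the norm is at most `O(ε)` plus a term that vanishes as `ρ → 0`. -/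

open Complex Metric Set MeasureTheory Filter

noncomputable section

open scoped ComplexConjugate Topology

lemma norm_prod_sub_prod_le {R ι : Type*} [NormedCommRing R] [NormOneClass R] (s : Finset ι)
    {c d : ι → R} (hc : ∀ i ∈ s, ‖c i‖ ≤ 1) (hd : ∀ i ∈ s, ‖d i‖ ≤ 1) :
    ‖∏ i ∈ s, c i - ∏ i ∈ s, d i‖ ≤ ∑ i ∈ s, ‖c i - d i‖ := by
  classical
  induction s using Finset.induction_on with
  | empty => simp
  | insert j s hj ih =>
    simp only [Finset.mem_insert, forall_eq_or_imp] at hc hd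
    have hds : ‖∏ i ∈ s, d i‖ ≤ 1 :=
      (Finset.norm_prod_le _ _).trans (Finset.prod_le_one (fun _ _ => norm_nonneg _) hd.2)
    rw [Finset.prod_insert hj, Finset.prod_insert hj, Finset.sum_insert hj]
    calc ‖c j * ∏ i ∈ s, c i - d j * ∏ i ∈ s, d i‖
        = ‖c j * (∏ i ∈ s, c i - ∏ i ∈ s, d i) + (c j - d j) * ∏ i ∈ s, d i‖ := by
          congr 1; ring
      _ ≤ ‖c j‖ * ‖∏ i ∈ s, c i - ∏ i ∈ s, d i‖ + ‖c j - d j‖ * ‖∏ i ∈ s, d i‖ :=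
          (norm_add_le _ _).trans (add_le_add (norm_mul_le _ _) (norm_mul_le _ _))
      _ ≤ 1 * ∑ i ∈ s, ‖c i - d i‖ + ‖c j - d j‖ * 1 := by
          gcongr
          · exact hc.1
          · exact ih hc.2 hd.2
      _ = ‖c j - d j‖ + ∑ i ∈ s, ‖c i - d i‖ := by ring

lemma norm_mul_sub_sub_mul_sub_le {R : Type*} [SeminormedRing R] (p q x y : R) :
    ‖p * x - x - (q * y - y)‖ ≤ ‖p - 1‖ * ‖x - y‖ + ‖p - q‖ * ‖y‖ := by
  have h : p * x - x - (q * y - y) = (p - 1) * (x - y) + (p - q) * y := by noncomm_ring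
  rw [h]
  exact (norm_add_le _ _).trans (add_le_add (norm_mul_le _ _) (norm_mul_le _ _))

lemma norm_sub_le_two {ξ ζ : ℂ} (hξ : ‖ξ‖ ≤ 1) (hζ : ‖ζ‖ ≤ 1) : ‖ξ - ζ‖ ≤ 2 :=
  (norm_sub_le _ _).trans (by linarith)

namespace ModulusOfContinuity

variable (ω : ModulusOfContinuity) {s t : ℝ}

lemma apply_nonneg (h0 : 0 ≤ t) (h2 : t ≤ 2) : 0 ≤ ω t := ω.nonneg t ⟨h0, h2⟩

lemma apply_le_apply (hs : 0 ≤ s) (hst : s ≤ t) (ht : t ≤ 2) : ω s ≤ ω t :=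
  ω.mono ⟨hs, hst.trans ht⟩ ⟨hs.trans hst, ht⟩ hst

lemma apply_mul_le_apply_mul (hs : 0 < s) (hst : s ≤ t) (ht : t ≤ 2) : ω t * s ≤ ω s * t := by
  have h := ω.quot_anti ⟨hs, hst.trans ht⟩ ⟨hs.trans_le hst, ht⟩ hst
  rwa [div_le_div_iff₀ (hs.trans_le hst) hs] at h

lemma apply_pos (h0 : 0 < t) (h2 : t ≤ 2) : 0 < ω t := by
  obtain ⟨t₀, ht₀, hne⟩ := ω.nontrivial
  have ht₀pos : 0 < t₀ := ht₀.1.lt_of_ne (by rintro rfl; exact hne ω.zero)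
  have hωt₀ : 0 < ω t₀ := (ω.nonneg t₀ ht₀).lt_of_ne' hne
  rcases le_total t₀ t with h | h
  · exact hωt₀.trans_le (ω.apply_le_apply ht₀pos.le h h2)
  · have := ω.apply_mul_le_apply_mul h0 h ht₀.2
    nlinarith [mul_pos hωt₀ h0]

lemma div_max_mul_apply_le_apply_sqrt {ρ r : ℝ} (hρ : 0 < ρ) (hρ1 : ρ ≤ 1) (hr : 0 ≤ r)
    (hr2 : r ≤ 2) : ρ / max ρ r * ω r ≤ ω √ρ := by
  have hq : 0 < √ρ := Real.sqrt_pos.2 hρ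
  have hq1 : √ρ ≤ 1 := Real.sqrt_le_one.2 hρ1
  have hωq : 0 ≤ ω √ρ := ω.apply_nonneg hq.le (by linarith)
  rcases le_or_gt r √ρ with h | h
  · calc ρ / max ρ r * ω r ≤ 1 * ω √ρ :=
          mul_le_mul ((div_le_one (hρ.trans_le (le_max_left _ _))).2 (le_max_left _ _))
            (ω.apply_le_apply hr h (by linarith)) (ω.apply_nonneg hr hr2) zero_le_one
      _ = ω √ρ := one_mul _
  · have hr0 : 0 < r := hq.trans h
    calc ρ / max ρ r * ω r ≤ ρ / r * ω r := by
          gcongr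
          · exact ω.apply_nonneg hr hr2
          · exact le_max_right _ _
      _ = √ρ * (ω r * √ρ) / r := by
          rw [mul_comm (ω r), ← mul_assoc, Real.mul_self_sqrt hρ.le]; ring
      _ ≤ √ρ * (ω √ρ * r) / r := by
          gcongr ?_ / r
          exact mul_le_mul_of_nonneg_left (ω.apply_mul_le_apply_mul hq h.le hr2) hq.le
      _ = √ρ * ω √ρ := by field_simp
      _ ≤ ω √ρ := mul_le_of_le_one_left hωq hq1

lemma apply_mul_div_max_mul_max_le {ρ r s d : ℝ} (hρ : 0 < ρ) (hs : 0 ≤ s) (hs2 : s ≤ 2)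
    (hd : 0 < d) (hd2 : d ≤ 2) (hdrs : d ≤ r + s) :
    ω s * (ρ * d / (max ρ r * max ρ s)) ≤ 2 * ω d := by
  have hρr : ρ ≤ max ρ r := le_max_left _ _
  have hρs : ρ ≤ max ρ s := le_max_left _ _
  have hωd : 0 ≤ ω d := ω.apply_nonneg hd.le hd2
  rw [mul_div_assoc', div_le_iff₀ (by positivity)]
  rcases le_total d s with h | h
  · calc ω s * (ρ * d) = ρ * (ω s * d) := by ring
      _ ≤ max ρ r * (ω d * max ρ s) := by
          refine mul_le_mul hρr ((ω.apply_mul_le_apply_mul hd h hs2).trans ?_)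
            (mul_nonneg (ω.apply_nonneg hs hs2) hd.le) (hρ.le.trans hρr)
          exact mul_le_mul_of_nonneg_left (le_max_right _ _) hωd
      _ ≤ 2 * ω d * (max ρ r * max ρ s) := by nlinarith [mul_nonneg hωd (hρ.le.trans hρr)]
  · have hρd : ρ * d ≤ 2 * (max ρ r * max ρ s) := by
      nlinarith [le_max_right ρ r, le_max_right ρ s]
    calc ω s * (ρ * d) ≤ ω d * (2 * (max ρ r * max ρ s)) := by
          gcongr
          exact ω.apply_le_apply hs h hd2
      _ = 2 * ω d * (max ρ r * max ρ s) := by ring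

lemma apply_mul_div_max_mul_max_le_of_le {ρ δ r s d : ℝ} (hρ : 0 < ρ) (hρ1 : ρ ≤ 1) (hδ : 0 < δ)
    (hδr : δ ≤ r) (hs : 0 ≤ s) (hs2 : s ≤ 2) (hd : 0 < d) (hd2 : d ≤ 2) :
    ω s * (ρ * d / (max ρ r * max ρ s)) ≤ 2 * ω √ρ / (δ * ω 2) * ω d := by
  have hω2 : 0 < ω 2 := ω.apply_pos two_pos le_rfl
  have hdω : d ≤ ω d * 2 / ω 2 := by
    rw [le_div_iff₀ hω2, mul_comm]; exact ω.apply_mul_le_apply_mul hd hd2 le_rfl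
  have hMr : δ ≤ max ρ r := hδr.trans (le_max_right _ _)
  calc ω s * (ρ * d / (max ρ r * max ρ s)) = ρ / max ρ s * ω s * (d / max ρ r) := by ring
    _ ≤ ω √ρ * ((ω d * 2 / ω 2) / δ) := by
        gcongr
        · exact ω.apply_nonneg (Real.sqrt_nonneg _) ((Real.sqrt_le_one.2 hρ1).trans one_le_two)
        · exact ω.div_max_mul_apply_le_apply_sqrt hρ hρ1 hs hs2
        · exact hd.le.trans hdω
    _ = 2 * ω √ρ / (δ * ω 2) * ω d := by ring

lemma forall_norm_sub_le_of_ne {S : Set ℂ} {f : ℂ → ℂ} {c : ℝ}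
    (h : ∀ ξ ∈ S, ∀ ζ ∈ S, ξ ≠ ζ → ‖f ξ - f ζ‖ ≤ c * ω ‖ξ - ζ‖) :
    ∀ ξ ∈ S, ∀ ζ ∈ S, ‖f ξ - f ζ‖ ≤ c * ω ‖ξ - ζ‖ := by
  intro ξ hξ ζ hζ
  rcases eq_or_ne ξ ζ with rfl | hξζ
  · simp [ω.zero]
  · exact h ξ hξ ζ hζ hξζ

lemma tendsto_apply_sqrt : Tendsto (fun ρ : ℝ => ω √ρ) (𝓝[>] 0) (𝓝 0) := by
  have hsqrt : Tendsto (fun ρ : ℝ => √ρ) (𝓝[>] 0) (𝓝[Icc 0 2] 0) := by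
    refine tendsto_nhdsWithin_iff.2 ⟨?_, ?_⟩
    · simpa using (Real.continuous_sqrt.tendsto 0).mono_left nhdsWithin_le_nhds
    · filter_upwards [Ioo_mem_nhdsGT (zero_lt_one' ℝ)] with ρ hρ
      exact ⟨Real.sqrt_nonneg _, (Real.sqrt_le_one.2 hρ.2.le).trans one_le_two⟩
  have h := (ω.cont 0 ⟨le_rfl, zero_le_two⟩).tendsto.comp hsqrt
  rwa [ω.zero] at h

end ModulusOfContinuity

lemma MemLip.exists_nonneg_forall_norm_sub_le {ω : ModulusOfContinuity} {f : ℂ → ℂ}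
    (hf : MemLip ω f) :
    ∃ C, 0 ≤ C ∧ ∀ ξ ∈ sphere (0:ℂ) 1, ∀ ζ ∈ sphere (0:ℂ) 1, ‖f ξ - f ζ‖ ≤ C * ω ‖ξ - ζ‖ := by
  obtain ⟨-, -, C, hC⟩ := hf
  refine ⟨max C 0, le_max_right _ _, ω.forall_norm_sub_le_of_ne fun ξ hξ ζ hζ hξζ => ?_⟩
  refine (hC ξ hξ ζ hζ hξζ).trans (mul_le_mul_of_nonneg_right (le_max_left _ _) ?_)
  exact ω.apply_nonneg (norm_nonneg _)
    (norm_sub_le_two (mem_sphere_zero_iff_norm.1 hξ).le (mem_sphere_zero_iff_norm.1 hζ).le)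

lemma MemLip.diffContOnCl {ω : ModulusOfContinuity} {f : ℂ → ℂ} (hf : MemLip ω f) :
    DiffContOnCl ℂ f (ball 0 1) :=
  ⟨hf.2.1, by rw [closure_ball _ one_ne_zero]; exact hf.1⟩

lemma supNorm_le_of_forall_mem_sphere {f : ℂ → ℂ} (hf : DiffContOnCl ℂ f (ball 0 1)) {M : ℝ}
    (hM : ∀ z ∈ sphere (0:ℂ) 1, ‖f z‖ ≤ M) : supNorm f ≤ M := by
  refine Real.sSup_le ?_ ((norm_nonneg _).trans (hM 1 (by simp)))
  rintro _ ⟨z, hz, rfl⟩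
  rw [← closure_ball _ one_ne_zero] at hz
  exact Complex.norm_le_of_forall_mem_frontier_norm_le isBounded_ball hf
    (by rwa [frontier_ball _ one_ne_zero]) hz

lemma lipSemi_le (ω : ModulusOfContinuity) {f : ℂ → ℂ} {L : ℝ}
    (hL : ∀ ξ ∈ sphere (0:ℂ) 1, ∀ ζ ∈ sphere (0:ℂ) 1, ξ ≠ ζ → ‖f ξ - f ζ‖ ≤ L * ω ‖ξ - ζ‖) :
    lipSemi ω f ≤ L := by
  have hω2 : 0 < ω 2 := ω.apply_pos two_pos le_rfl
  have hL0 : 0 ≤ L := by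
    have h := hL 1 (by simp) (-1) (by simp) (by norm_num)
    rw [show ‖(1 : ℂ) - -1‖ = 2 by norm_num] at h
    exact nonneg_of_mul_nonneg_left ((norm_nonneg _).trans h) hω2
  refine Real.sSup_le ?_ hL0
  rintro _ ⟨⟨ξ, ζ⟩, ⟨hξ, hζ, hξζ⟩, rfl⟩
  rw [mem_sphere_zero_iff_norm] at hξ hζ
  exact div_le_of_le_mul₀ (ω.apply_nonneg (norm_nonneg _) (norm_sub_le_two hξ.le hζ.le)) hL0
    (hL ξ (by simpa using hξ) ζ (by simpa using hζ) hξζ)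

lemma lipNorm_nonneg (ω : ModulusOfContinuity) (f : ℂ → ℂ) : 0 ≤ lipNorm ω f := by
  refine add_nonneg (Real.sSup_nonneg ?_) (Real.sSup_nonneg ?_)
  · rintro _ ⟨z, -, rfl⟩
    exact norm_nonneg _
  · rintro _ ⟨⟨ξ, ζ⟩, ⟨hξ, hζ, -⟩, rfl⟩
    rw [mem_sphere_zero_iff_norm] at hξ hζ
    exact div_nonneg (norm_nonneg _) (ω.apply_nonneg (norm_nonneg _) (norm_sub_le_two hξ.le hζ.le))

def phiFactor (a : ℂ) (ρ : ℝ) (z : ℂ) : ℂ := (z * conj a - 1) / (z * conj a - 1 - ρ)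

/-- The paper's `φ_{ρ,K}`, for the points `a k`. -/
def phi {ι : Type*} [Fintype ι] (a : ι → ℂ) (ρ : ℝ) (z : ℂ) : ℂ := ∏ k, phiFactor (a k) ρ z

section phiFactor

variable {a z ξ ζ : ℂ} {ρ : ℝ}

lemma norm_mul_conj_sub_one (ha : ‖a‖ = 1) : ‖z * conj a - 1‖ = ‖z - a‖ := by
  have h : z * conj a - 1 = conj a * (z - a) := by
    rw [mul_sub, mul_comm (conj a) a, Complex.mul_conj, Complex.normSq_eq_norm_sq, ha]
    push_cast
    ring
  rw [h, norm_mul, Complex.norm_conj, ha, one_mul]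

lemma max_le_norm_sub_ofReal {u : ℂ} (hu : u.re ≤ 0) (hρ : 0 ≤ ρ) : max ρ ‖u‖ ≤ ‖u - ρ‖ := by
  refine max_le ?_ ?_
  · calc ρ ≤ |(u - ρ).re| := by
          rw [Complex.sub_re, Complex.ofReal_re, abs_of_nonpos (by linarith)]; linarith
      _ ≤ ‖u - ρ‖ := Complex.abs_re_le_norm _
  · rw [← sq_le_sq₀ (norm_nonneg _) (norm_nonneg _), Complex.sq_norm, Complex.sq_norm,
      Complex.normSq_apply, Complex.normSq_apply, Complex.sub_re, Complex.sub_im,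
      Complex.ofReal_re, Complex.ofReal_im, sub_zero]
    nlinarith

lemma max_le_norm_mul_conj_sub_one_sub (hz : ‖z‖ ≤ 1) (ha : ‖a‖ = 1) (hρ : 0 < ρ) :
    max ρ ‖z - a‖ ≤ ‖z * conj a - 1 - ρ‖ := by
  have hre : (z * conj a - 1).re ≤ 0 := by
    have h : (z * conj a).re ≤ 1 := (Complex.re_le_norm _).trans (by simpa [ha] using hz)
    rw [Complex.sub_re, Complex.one_re]
    linarith
  rw [← norm_mul_conj_sub_one ha]
  exact max_le_norm_sub_ofReal hre hρ.le

lemma mul_conj_sub_one_sub_ne_zero (hz : ‖z‖ ≤ 1) (ha : ‖a‖ = 1) (hρ : 0 < ρ) :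
    z * conj a - 1 - ρ ≠ 0 :=
  norm_pos_iff.1 (hρ.trans_le ((le_max_left _ _).trans (max_le_norm_mul_conj_sub_one_sub hz ha hρ)))

lemma norm_phiFactor_le_one (hz : ‖z‖ ≤ 1) (ha : ‖a‖ = 1) (hρ : 0 < ρ) :
    ‖phiFactor a ρ z‖ ≤ 1 := by
  rw [phiFactor, norm_div, norm_mul_conj_sub_one ha]
  exact div_le_one_of_le₀ ((le_max_right _ _).trans (max_le_norm_mul_conj_sub_one_sub hz ha hρ))
    (norm_nonneg _)

lemma norm_phiFactor_sub_one_le (hz : ‖z‖ ≤ 1) (ha : ‖a‖ = 1) (hρ : 0 < ρ) :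
    ‖phiFactor a ρ z - 1‖ ≤ ρ / max ρ ‖z - a‖ := by
  have hne := mul_conj_sub_one_sub_ne_zero hz ha hρ
  have h : phiFactor a ρ z - 1 = ρ / (z * conj a - 1 - ρ) := by
    rw [phiFactor]; field_simp; ring
  rw [h, norm_div, Complex.norm_real, Real.norm_of_nonneg hρ.le]
  exact div_le_div_of_nonneg_left hρ.le (lt_max_of_lt_left hρ)
    (max_le_norm_mul_conj_sub_one_sub hz ha hρ)

lemma norm_phiFactor_sub_phiFactor_le (hξ : ‖ξ‖ ≤ 1) (hζ : ‖ζ‖ ≤ 1) (ha : ‖a‖ = 1)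
    (hρ : 0 < ρ) :
    ‖phiFactor a ρ ξ - phiFactor a ρ ζ‖ ≤ ρ * ‖ξ - ζ‖ / (max ρ ‖ξ - a‖ * max ρ ‖ζ - a‖) := by
  have hξ' := mul_conj_sub_one_sub_ne_zero hξ ha hρ
  have hζ' := mul_conj_sub_one_sub_ne_zero hζ ha hρ
  have h : phiFactor a ρ ξ - phiFactor a ρ ζ =
      ρ * ((ζ - ξ) * conj a) / ((ξ * conj a - 1 - ρ) * (ζ * conj a - 1 - ρ)) := by
    rw [phiFactor, phiFactor, div_sub_div _ _ hξ' hζ']; congr 1; ring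
  rw [h, norm_div, norm_mul, norm_mul, norm_mul, Complex.norm_real, Real.norm_of_nonneg hρ.le,
    Complex.norm_conj, ha, mul_one, norm_sub_rev ζ]
  exact div_le_div_of_nonneg_left (by positivity) (by positivity)
    (mul_le_mul (max_le_norm_mul_conj_sub_one_sub hξ ha hρ)
      (max_le_norm_mul_conj_sub_one_sub hζ ha hρ) (hρ.le.trans (le_max_left _ _)) (norm_nonneg _))

lemma differentiableOn_phiFactor (ha : ‖a‖ = 1) (hρ : 0 < ρ) :
    DifferentiableOn ℂ (phiFactor a ρ) (closedBall 0 1) := by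
  intro z hz
  refine (DifferentiableAt.div (by fun_prop) (by fun_prop) ?_).differentiableWithinAt
  exact mul_conj_sub_one_sub_ne_zero (by simpa using hz) ha hρ

end phiFactor

section phi

variable {ι : Type*} [Fintype ι] {a : ι → ℂ} {z ξ ζ : ℂ} {ρ : ℝ}

lemma norm_phi_sub_one_le (hz : ‖z‖ ≤ 1) (ha : ∀ k, ‖a k‖ = 1) (hρ : 0 < ρ) :
    ‖phi a ρ z - 1‖ ≤ ∑ k, ρ / max ρ ‖z - a k‖ := by
  calc ‖phi a ρ z - 1‖ = ‖∏ k, phiFactor (a k) ρ z - ∏ _k : ι, (1 : ℂ)‖ := by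
        rw [Finset.prod_const_one, phi]
    _ ≤ ∑ k, ‖phiFactor (a k) ρ z - 1‖ :=
        norm_prod_sub_prod_le _ (fun k _ => norm_phiFactor_le_one hz (ha k) hρ) (by simp)
    _ ≤ ∑ k, ρ / max ρ ‖z - a k‖ :=
        Finset.sum_le_sum fun k _ => norm_phiFactor_sub_one_le hz (ha k) hρ

lemma norm_phi_sub_phi_le (hξ : ‖ξ‖ ≤ 1) (hζ : ‖ζ‖ ≤ 1) (ha : ∀ k, ‖a k‖ = 1) (hρ : 0 < ρ) :
    ‖phi a ρ ξ - phi a ρ ζ‖ ≤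
      ∑ k, ρ * ‖ξ - ζ‖ / (max ρ ‖ξ - a k‖ * max ρ ‖ζ - a k‖) :=
  (norm_prod_sub_prod_le _ (fun k _ => norm_phiFactor_le_one hξ (ha k) hρ)
    (fun k _ => norm_phiFactor_le_one hζ (ha k) hρ)).trans
    (Finset.sum_le_sum fun k _ => norm_phiFactor_sub_phiFactor_le hξ hζ (ha k) hρ)

lemma norm_phi_sub_one_le_two (hz : ‖z‖ ≤ 1) (ha : ∀ k, ‖a k‖ = 1) (hρ : 0 < ρ) :
    ‖phi a ρ z - 1‖ ≤ 2 := by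
  have h : ‖phi a ρ z‖ ≤ 1 := (Finset.norm_prod_le _ _).trans
    (Finset.prod_le_one (fun _ _ => norm_nonneg _) fun k _ => norm_phiFactor_le_one hz (ha k) hρ)
  linarith [norm_sub_le (phi a ρ z) 1, norm_one (α := ℂ)]

lemma differentiableOn_phi (ha : ∀ k, ‖a k‖ = 1) (hρ : 0 < ρ) :
    DifferentiableOn ℂ (phi a ρ) (closedBall 0 1) :=
  DifferentiableOn.fun_finsetProd fun k _ => differentiableOn_phiFactor (ha k) hρ

end phi

lemma mem_ENbhd_of_mem {E : Set ℂ} {w : ℂ} {δ : ℝ} (hE : E ⊆ sphere (0:ℂ) 1) (hw : w ∈ E)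
    (hδ : 0 ≤ δ) : w ∈ ENbhd E δ :=
  ⟨hE hw, by rw [infDist_zero_of_mem hw]; exact hδ⟩

lemma le_norm_sub_of_notMem_ENbhd {E : Set ℂ} {z w : ℂ} {δ : ℝ} (hz : z ∈ sphere (0:ℂ) 1)
    (hzE : z ∉ ENbhd E δ) (hw : w ∈ E) : δ ≤ ‖z - w‖ :=
  (not_le.1 fun h => hzE ⟨hz, h⟩).le.trans ((infDist_le_dist_of_mem hw).trans_eq (dist_eq_norm _ _))

section estimates

variable (ω : ModulusOfContinuity) {ι : Type*} [Fintype ι] {a : ι → ℂ} {g : ℂ → ℂ} {E : Set ℂ}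
  {z ξ ζ : ℂ} {ρ C ε δ : ℝ}

lemma norm_phi_mul_sub_le (hz : ‖z‖ ≤ 1) (ha : ∀ k, ‖a k‖ = 1) (hρ : 0 < ρ) (hρ1 : ρ ≤ 1)
    (hC : 0 ≤ C) (hg : ∀ k, ‖g z‖ ≤ C * ω ‖z - a k‖) :
    ‖phi a ρ z * g z - g z‖ ≤ Fintype.card ι * (C * ω √ρ) := by
  calc ‖phi a ρ z * g z - g z‖ = ‖phi a ρ z - 1‖ * ‖g z‖ := by rw [← norm_mul, sub_one_mul]
    _ ≤ (∑ k, ρ / max ρ ‖z - a k‖) * ‖g z‖ := by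
        gcongr; exact norm_phi_sub_one_le hz ha hρ
    _ = ∑ k, ρ / max ρ ‖z - a k‖ * ‖g z‖ := Finset.sum_mul _ _ _
    _ ≤ ∑ _k : ι, C * ω √ρ := Finset.sum_le_sum fun k _ => by
        calc ρ / max ρ ‖z - a k‖ * ‖g z‖ ≤ ρ / max ρ ‖z - a k‖ * (C * ω ‖z - a k‖) := by
              gcongr; exact hg k
          _ = C * (ρ / max ρ ‖z - a k‖ * ω ‖z - a k‖) := by ring
          _ ≤ C * ω √ρ := by
              gcongr
              exact ω.div_max_mul_apply_le_apply_sqrt hρ hρ1 (norm_nonneg _)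
                (norm_sub_le_two hz (ha k).le)
    _ = Fintype.card ι * (C * ω √ρ) := by simp

lemma norm_phi_mul_sub_sub_le_of_near (hξ : ‖ξ‖ ≤ 1) (hζ : ‖ζ‖ ≤ 1) (hξζ : ξ ≠ ζ)
    (ha : ∀ k, ‖a k‖ = 1) (hρ : 0 < ρ) (hε : 0 ≤ ε)
    (hgξζ : ‖g ξ - g ζ‖ ≤ ε * ω ‖ξ - ζ‖) (hgζ : ∀ k, ‖g ζ‖ ≤ ε * ω ‖ζ - a k‖) :
    ‖phi a ρ ξ * g ξ - g ξ - (phi a ρ ζ * g ζ - g ζ)‖ ≤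
      2 * (Fintype.card ι + 1) * ε * ω ‖ξ - ζ‖ := by
  have hd : 0 < ‖ξ - ζ‖ := norm_pos_iff.2 (sub_ne_zero.2 hξζ)
  have hd2 := norm_sub_le_two hξ hζ
  calc _ ≤ ‖phi a ρ ξ - 1‖ * ‖g ξ - g ζ‖ + ‖phi a ρ ξ - phi a ρ ζ‖ * ‖g ζ‖ :=
        norm_mul_sub_sub_mul_sub_le _ _ _ _
    _ ≤ 2 * (ε * ω ‖ξ - ζ‖) +
        (∑ k, ρ * ‖ξ - ζ‖ / (max ρ ‖ξ - a k‖ * max ρ ‖ζ - a k‖)) * ‖g ζ‖ := by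
        gcongr
        · exact norm_phi_sub_one_le_two hξ ha hρ
        · exact norm_phi_sub_phi_le hξ hζ ha hρ
    _ = 2 * (ε * ω ‖ξ - ζ‖) +
        ∑ k, ρ * ‖ξ - ζ‖ / (max ρ ‖ξ - a k‖ * max ρ ‖ζ - a k‖) * ‖g ζ‖ := by
        rw [Finset.sum_mul]
    _ ≤ 2 * (ε * ω ‖ξ - ζ‖) + ∑ _k : ι, ε * (2 * ω ‖ξ - ζ‖) := by
        refine add_le_add le_rfl (Finset.sum_le_sum fun k _ => ?_)
        calc _ ≤ ρ * ‖ξ - ζ‖ / (max ρ ‖ξ - a k‖ * max ρ ‖ζ - a k‖) * (ε * ω ‖ζ - a k‖) := by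
              gcongr; exact hgζ k
          _ = ε * (ω ‖ζ - a k‖ * (ρ * ‖ξ - ζ‖ / (max ρ ‖ξ - a k‖ * max ρ ‖ζ - a k‖))) := by ring
          _ ≤ ε * (2 * ω ‖ξ - ζ‖) := by
              refine mul_le_mul_of_nonneg_left (ω.apply_mul_div_max_mul_max_le hρ (norm_nonneg _)
                (norm_sub_le_two hζ (ha k).le) hd hd2 ?_) hε
              simpa [norm_sub_rev ζ] using norm_sub_le_norm_sub_add_norm_sub ξ (a k) ζ
    _ = 2 * (Fintype.card ι + 1) * ε * ω ‖ξ - ζ‖ := by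
        simp only [Finset.sum_const, Finset.card_univ, nsmul_eq_mul]; ring

lemma norm_phi_mul_sub_sub_le_of_far (hξ : ‖ξ‖ ≤ 1) (hζ : ‖ζ‖ ≤ 1) (hξζ : ξ ≠ ζ)
    (ha : ∀ k, ‖a k‖ = 1) (hρ : 0 < ρ) (hρ1 : ρ ≤ 1) (hδ : 0 < δ)
    (hfar : ∀ k, δ ≤ ‖ξ - a k‖) (hC : 0 ≤ C)
    (hgξζ : ‖g ξ - g ζ‖ ≤ C * ω ‖ξ - ζ‖) (hgζ : ∀ k, ‖g ζ‖ ≤ C * ω ‖ζ - a k‖) :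
    ‖phi a ρ ξ * g ξ - g ξ - (phi a ρ ζ * g ζ - g ζ)‖ ≤
      Fintype.card ι * C * (ρ / δ + 2 * ω √ρ / (δ * ω 2)) * ω ‖ξ - ζ‖ := by
  have hd : 0 < ‖ξ - ζ‖ := norm_pos_iff.2 (sub_ne_zero.2 hξζ)
  have hd2 := norm_sub_le_two hξ hζ
  have hφξ : ‖phi a ρ ξ - 1‖ ≤ Fintype.card ι * (ρ / δ) := by
    refine (norm_phi_sub_one_le hξ ha hρ).trans ?_
    calc ∑ k, ρ / max ρ ‖ξ - a k‖ ≤ ∑ _k : ι, ρ / δ := by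
          gcongr with k; exact (hfar k).trans (le_max_right _ _)
      _ = Fintype.card ι * (ρ / δ) := by simp
  calc _ ≤ ‖phi a ρ ξ - 1‖ * ‖g ξ - g ζ‖ + ‖phi a ρ ξ - phi a ρ ζ‖ * ‖g ζ‖ :=
        norm_mul_sub_sub_mul_sub_le _ _ _ _
    _ ≤ Fintype.card ι * (ρ / δ) * (C * ω ‖ξ - ζ‖) +
        (∑ k, ρ * ‖ξ - ζ‖ / (max ρ ‖ξ - a k‖ * max ρ ‖ζ - a k‖)) * ‖g ζ‖ := by
        gcongr
        exact norm_phi_sub_phi_le hξ hζ ha hρ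
    _ = Fintype.card ι * (ρ / δ) * (C * ω ‖ξ - ζ‖) +
        ∑ k, ρ * ‖ξ - ζ‖ / (max ρ ‖ξ - a k‖ * max ρ ‖ζ - a k‖) * ‖g ζ‖ := by
        rw [Finset.sum_mul]
    _ ≤ Fintype.card ι * (ρ / δ) * (C * ω ‖ξ - ζ‖) +
        ∑ _k : ι, C * (2 * ω √ρ / (δ * ω 2) * ω ‖ξ - ζ‖) := by
        refine add_le_add le_rfl (Finset.sum_le_sum fun k _ => ?_)
        calc _ ≤ ρ * ‖ξ - ζ‖ / (max ρ ‖ξ - a k‖ * max ρ ‖ζ - a k‖) * (C * ω ‖ζ - a k‖) := by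
              gcongr; exact hgζ k
          _ = C * (ω ‖ζ - a k‖ * (ρ * ‖ξ - ζ‖ / (max ρ ‖ξ - a k‖ * max ρ ‖ζ - a k‖))) := by ring
          _ ≤ C * (2 * ω √ρ / (δ * ω 2) * ω ‖ξ - ζ‖) :=
              mul_le_mul_of_nonneg_left (ω.apply_mul_div_max_mul_max_le_of_le hρ hρ1 hδ (hfar k)
                (norm_nonneg _) (norm_sub_le_two hζ (ha k).le) hd hd2) hC
    _ = Fintype.card ι * C * (ρ / δ + 2 * ω √ρ / (δ * ω 2)) * ω ‖ξ - ζ‖ := by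
        simp only [Finset.sum_const, Finset.card_univ, nsmul_eq_mul]; ring


lemma norm_phi_mul_sub_sub_le (hE : E ⊆ sphere (0:ℂ) 1) (haE : ∀ k, a k ∈ E)
    (hga : ∀ k, g (a k) = 0) (hC0 : 0 ≤ C)
    (hC : ∀ ξ ∈ sphere (0:ℂ) 1, ∀ ζ ∈ sphere (0:ℂ) 1, ‖g ξ - g ζ‖ ≤ C * ω ‖ξ - ζ‖)
    (hε : 0 ≤ ε) (hδ : 0 < δ)
    (hJ : ∀ ξ ∈ ENbhd E δ, ∀ ζ ∈ ENbhd E δ, ‖g ξ - g ζ‖ ≤ ε * ω ‖ξ - ζ‖)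
    (hρ : 0 < ρ) (hρ1 : ρ ≤ 1) (hξ : ξ ∈ sphere (0:ℂ) 1) (hζ : ζ ∈ sphere (0:ℂ) 1)
    (hξζ : ξ ≠ ζ) :
    ‖phi a ρ ξ * g ξ - g ξ - (phi a ρ ζ * g ζ - g ζ)‖ ≤
      (2 * (Fintype.card ι + 1) * ε + Fintype.card ι * C * (ρ / δ + 2 * ω √ρ / (δ * ω 2))) *
        ω ‖ξ - ζ‖ := by
  have ha : ∀ k, ‖a k‖ = 1 := fun k => mem_sphere_zero_iff_norm.1 (hE (haE k))
  have hξ1 : ‖ξ‖ ≤ 1 := (mem_sphere_zero_iff_norm.1 hξ).le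
  have hζ1 : ‖ζ‖ ≤ 1 := (mem_sphere_zero_iff_norm.1 hζ).le
  have haN : ∀ k, a k ∈ ENbhd E δ := fun k => mem_ENbhd_of_mem hE (haE k) hδ.le
  have hfar : ∀ z ∈ sphere (0:ℂ) 1, z ∉ ENbhd E δ → ∀ k, δ ≤ ‖z - a k‖ := fun z hz hzN k =>
    le_norm_sub_of_notMem_ENbhd hz hzN (haE k)
  have hgC : ∀ z ∈ sphere (0:ℂ) 1, ∀ k, ‖g z‖ ≤ C * ω ‖z - a k‖ := fun z hz k => by
    simpa [hga k] using hC z hz (a k) (hE (haE k))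
  have hωd : 0 ≤ ω ‖ξ - ζ‖ := ω.apply_nonneg (norm_nonneg _) (norm_sub_le_two hξ1 hζ1)
  set A := 2 * (Fintype.card ι + 1) * ε
  set B := Fintype.card ι * C * (ρ / δ + 2 * ω √ρ / (δ * ω 2))
  have hA : 0 ≤ A := by positivity
  have hB : 0 ≤ B := by
    have := ω.apply_pos two_pos le_rfl
    have := ω.apply_nonneg (Real.sqrt_nonneg ρ) ((Real.sqrt_le_one.2 hρ1).trans one_le_two)
    positivity
  have hle_near : A * ω ‖ξ - ζ‖ ≤ (A + B) * ω ‖ξ - ζ‖ := by gcongr; linarith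
  have hle_far : B * ω ‖ξ - ζ‖ ≤ (A + B) * ω ‖ξ - ζ‖ := by gcongr; linarith
  by_cases hξN : ξ ∈ ENbhd E δ
  · by_cases hζN : ζ ∈ ENbhd E δ
    · exact (norm_phi_mul_sub_sub_le_of_near ω hξ1 hζ1 hξζ ha hρ hε (hJ ξ hξN ζ hζN)
        fun k => by simpa [hga k] using hJ ζ hζN (a k) (haN k)).trans hle_near
    · have h := norm_phi_mul_sub_sub_le_of_far ω hζ1 hξ1 hξζ.symm ha hρ hρ1 hδ (hfar ζ hζ hζN)
        hC0 (hC ζ hζ ξ hξ) (hgC ξ hξ)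
      rw [norm_sub_rev, norm_sub_rev ζ] at h
      exact h.trans hle_far
  · exact (norm_phi_mul_sub_sub_le_of_far ω hξ1 hζ1 hξζ ha hρ hρ1 hδ (hfar ξ hξ hξN) hC0
      (hC ξ hξ ζ hζ) (hgC ζ hζ)).trans hle_far

lemma lipNorm_phi_mul_sub_le (hE : E ⊆ sphere (0:ℂ) 1) (haE : ∀ k, a k ∈ E)
    (hga : ∀ k, g (a k) = 0) (hg : DiffContOnCl ℂ g (ball 0 1)) (hC0 : 0 ≤ C)
    (hC : ∀ ξ ∈ sphere (0:ℂ) 1, ∀ ζ ∈ sphere (0:ℂ) 1, ‖g ξ - g ζ‖ ≤ C * ω ‖ξ - ζ‖)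
    (hε : 0 ≤ ε) (hδ : 0 < δ)
    (hJ : ∀ ξ ∈ ENbhd E δ, ∀ ζ ∈ ENbhd E δ, ‖g ξ - g ζ‖ ≤ ε * ω ‖ξ - ζ‖)
    (hρ : 0 < ρ) (hρ1 : ρ ≤ 1) :
    lipNorm ω (fun z => phi a ρ z * g z - g z) ≤
      Fintype.card ι * (C * ω √ρ) + (2 * (Fintype.card ι + 1) * ε +
        Fintype.card ι * C * (ρ / δ + 2 * ω √ρ / (δ * ω 2))) := by
  have ha : ∀ k, ‖a k‖ = 1 := fun k => mem_sphere_zero_iff_norm.1 (hE (haE k))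
  have hφ : DiffContOnCl ℂ (phi a ρ) (ball 0 1) :=
    (differentiableOn_phi ha hρ).diffContOnCl_ball subset_rfl
  refine add_le_add (supNorm_le_of_forall_mem_sphere
    ⟨(hφ.1.mul hg.1).sub hg.1, (hφ.2.mul hg.2).sub hg.2⟩ fun z hz => ?_)
    (lipSemi_le ω fun ξ hξ ζ hζ hξζ =>
      norm_phi_mul_sub_sub_le ω hE haE hga hC0 hC hε hδ hJ hρ hρ1 hξ hζ hξζ)
  refine norm_phi_mul_sub_le ω (mem_sphere_zero_iff_norm.1 hz).le ha hρ hρ1 hC0 fun k => ?_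
  simpa [hga k] using hC z hz (a k) (hE (haE k))

end estimates

theorem finite_point_approximation_general
    (ω : ModulusOfContinuity)
    (E : Set ℂ) (hEsub : E ⊆ sphere (0:ℂ) 1)
    (g : ℂ → ℂ) (hg : MemJ ω E g)
    (K : ℕ) (a : Fin (K + 1) → ℂ) (ha : ∀ k, a k ∈ E) :
    Tendsto (fun ρ : ℝ => lipNorm ω (fun z =>
        (∏ k, (z * (starRingEnd ℂ) (a k) - 1) / (z * (starRingEnd ℂ) (a k) - 1 - (ρ : ℂ))) *
          g z - g z))
      (nhdsWithin 0 (Set.Ioi 0)) (nhds 0) := by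
  obtain ⟨⟨hgLip, hgE⟩, hJ⟩ := hg
  obtain ⟨C, hC0, hC⟩ := hgLip.exists_nonneg_forall_norm_sub_le
  refine tendsto_order.2 ⟨fun ε hε => .of_forall fun ρ => hε.trans_le (lipNorm_nonneg ω _),
    fun ε hε => ?_⟩
  set n : ℝ := (Fintype.card (Fin (K + 1)) : ℝ)
  obtain ⟨δ, hδ, hJδ⟩ := hJ (ε / (4 * (n + 1))) (by positivity)
  have hrest : Tendsto (fun ρ => n * (C * ω √ρ) + n * C * (ρ / δ + 2 * ω √ρ / (δ * ω 2)))
      (𝓝[>] 0) (𝓝 0) := by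
    have hω := ω.tendsto_apply_sqrt
    have hid : Tendsto (fun ρ : ℝ => ρ) (𝓝[>] 0) (𝓝 0) := nhdsWithin_le_nhds
    simpa using ((hω.const_mul C).const_mul n).add
      (((hid.div_const δ).add ((hω.const_mul 2).div_const (δ * ω 2))).const_mul (n * C))
  have hhalf : 2 * (n + 1) * (ε / (4 * (n + 1))) = ε / 2 := by
    have : n + 1 ≠ 0 := by positivity
    field_simp; ring
  filter_upwards [hrest.eventually (gt_mem_nhds (half_pos hε)), Ioc_mem_nhdsGT one_pos]
    with ρ hρε hρ
  calc _ ≤ _ := lipNorm_phi_mul_sub_le ω hEsub ha (fun k => hgE _ (ha k)) hgLip.diffContOnCl hC0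
        hC (by positivity) hδ (ω.forall_norm_sub_le_of_ne hJδ) hρ.1 hρ.2
    _ < ε := by linarith

/-- **Lemma (lem3).** For `g ∈ J_ω(E)` and finitely many points `a_0,…,a_K ∈ E`,
`‖φ_{ρ,K}·g - g‖_ω → 0` as `ρ → 0⁺`, where
`φ_{ρ,K}(z) = ∏_k (z·conj(a_k) - 1)/(z·conj(a_k) - 1 - ρ)`. -/
theorem finite_point_approximation
    (ω : ModulusOfContinuity)
    (E : Set ℂ) (hEsub : E ⊆ sphere (0:ℂ) 1) (hEclosed : IsClosed E)
    (g : ℂ → ℂ) (hg : MemJ ω E g)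
    (K : ℕ) (a : Fin (K + 1) → ℂ) (ha : ∀ k, a k ∈ E) :
    Tendsto (fun ρ : ℝ => lipNorm ω (fun z =>
        (∏ k, (z * (starRingEnd ℂ) (a k) - 1) / (z * (starRingEnd ℂ) (a k) - 1 - (ρ : ℂ))) *
          g z - g z))
      (nhdsWithin 0 (Set.Ioi 0)) (nhds 0) :=
  finite_point_approximation_general ω E hEsub g hg K a ha
end
end
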